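/- Let G be a nonabelian metacyclic p-group with presentation ⟨a, b | a^{p^n} = 1, b^{p^m} = a^{p^t}, b a b⁻¹ = a^r⟩ where r - 1 = p s. If p > 2, or if p = 2 and s is even, then the commutator c = [b, a] = b a b⁻¹ a⁻¹ satisfies c - 1 ∈ I_K(G)³, where K is a field of characteristic p. -/

import Mathlib

/-- The Jacobson radical of a ring, as an ideal. -/
def ringRad (A : Type*) [Ring A] : Ideal A := (⊥ : Ideal A).jacobson

/-- `B` is a filtered multiplicative `K`-basis of the `K`-algebra `A`:
it is a `K`-basis, products of basis elements are `0` or again basis elements,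
and `B ∩ rad A` is a `K`-basis of the Jacobson radical `rad A`. -/
def IsFilteredMulBasis (K : Type*) {A : Type*} [Field K] [Ring A] [Algebra K A]
    (B : Set A) : Prop :=
  LinearIndependent K ((↑) : B → A) ∧ Submodule.span K B = ⊤ ∧
  (∀ b₁ ∈ B, ∀ b₂ ∈ B, b₁ * b₂ = 0 ∨ b₁ * b₂ ∈ B) ∧
  LinearIndependent K ((↑) : ↥(B ∩ (ringRad A : Set A)) → A) ∧
  Submodule.span K (B ∩ (ringRad A : Set A)) = Submodule.restrictScalars K (ringRad A)

/-- The augmentation ideal of a group algebra. -/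
noncomputable def augIdeal (K G : Type*) [Field K] [Group G] : Ideal (MonoidAlgebra K G) :=
  RingHom.ker (MonoidAlgebra.lift K K G 1).toRingHom

/-!
Write `r - 1 = p s`. Since `b a b⁻¹ = a ^ r`, the commutator is `c = a ^ (r - 1) = a ^ (p s)`.
In characteristic `p` the Frobenius identity gives `g ^ (p ^ k) - 1 = (g - 1) ^ (p ^ k)` in `KG`,
so `c - 1` lies in `I ^ (p ^ k)` whenever `c` is a `p ^ k`-th power. For `p > 2` take
`c = (a ^ s) ^ p`; for `p = 2` and `s = 2 u` take `c = (a ^ u) ^ 4`. In both cases `p ^ k ≥ 3`.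
-/

theorem commutator_eq_pow_pred_of_conj_eq_pow {G : Type*} [Group G] {a b : G} {r : ℕ}
    (hconj : b * a * b⁻¹ = a ^ r) : b * a * b⁻¹ * a⁻¹ = a ^ (r - 1) := by
  rcases Nat.eq_zero_or_pos r with rfl | hr
  · have ha : a = 1 := by simpa using hconj
    simp [ha]
  · rw [hconj, ← Nat.sub_add_cancel hr, pow_succ, mul_inv_cancel_right, Nat.add_sub_cancel]

section GroupAlgebra

variable {K G : Type*} [Field K] [Group G]

theorem of_sub_one_mem_augIdeal (g : G) : MonoidAlgebra.of K G g - 1 ∈ augIdeal K G := by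
  simp [augIdeal, RingHom.mem_ker, map_sub]

theorem of_pow_sub_one_eq_pow (p : ℕ) [Fact p.Prime] [CharP K p] (g : G) (k : ℕ) :
    MonoidAlgebra.of K G (g ^ p ^ k) - 1 = (MonoidAlgebra.of K G g - 1) ^ p ^ k := by
  have : CharP (MonoidAlgebra K G) p := charP_of_injective_algebraMap' K p
  rw [sub_pow_char_pow_of_commute p k (Commute.one_right _), one_pow, map_pow]

theorem of_pow_sub_one_mem_augIdeal_pow (p : ℕ) [Fact p.Prime] [CharP K p] (g : G) {k e : ℕ}
    (he : e ≤ p ^ k) : MonoidAlgebra.of K G (g ^ p ^ k) - 1 ∈ augIdeal K G ^ e := by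
  rw [of_pow_sub_one_eq_pow p]
  exact Ideal.pow_le_pow_right he (Ideal.pow_mem_pow (of_sub_one_mem_augIdeal g) _)

end GroupAlgebra

theorem stmt_19_general {K : Type*} [Field K] {p : ℕ} [Fact p.Prime] [CharP K p]
    {G : Type*} [Group G] (r s : ℕ) (a b : G)
    (hconj : b * a * b⁻¹ = a ^ r)
    (hs : r - 1 = p * s)
    (hcase : 2 < p ∨ (p = 2 ∧ Even s)) :
    MonoidAlgebra.of K G (b * a * b⁻¹ * a⁻¹) - 1 ∈ augIdeal K G ^ 3 := by
  rw [commutator_eq_pow_pred_of_conj_eq_pow hconj, hs]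
  rcases hcase with hp | ⟨rfl, u, rfl⟩
  · have hc : a ^ (p * s) = (a ^ s) ^ p ^ 1 := by rw [pow_one, ← pow_mul, mul_comm]
    rw [hc]
    exact of_pow_sub_one_mem_augIdeal_pow p _ (by rw [pow_one]; omega)
  · have hc : a ^ (2 * (u + u)) = (a ^ u) ^ 2 ^ 2 := by rw [← pow_mul]; ring_nf
    rw [hc]
    exact of_pow_sub_one_mem_augIdeal_pow 2 _ (by norm_num)

theorem stmt_19 {K : Type*} [Field K] {p : ℕ} [Fact p.Prime] [CharP K p]
    {G : Type*} [Group G] [Finite G] (n m t r s : ℕ) (a b : G)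
    (ha : a ^ p ^ n = 1) (hb : b ^ p ^ m = a ^ p ^ t)
    (hconj : b * a * b⁻¹ = a ^ r)
    (hgen : Subgroup.closure {a, b} = (⊤ : Subgroup G))
    (hr : r ^ p ^ m ≡ 1 [MOD p ^ n]) (hrt : p ^ t * (r - 1) ≡ 0 [MOD p ^ n])
    (hnab : ¬ ∀ x y : G, x * y = y * x)
    (hs : r - 1 = p * s)
    (hcase : 2 < p ∨ (p = 2 ∧ Even s)) :
    MonoidAlgebra.of K G (b * a * b⁻¹ * a⁻¹) - 1 ∈ augIdeal K G ^ 3 :=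
  stmt_19_general r s a b hconj hs hcase
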